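/- arXiv:math/0612835 — 3 statements merged into one kernel-verified Lean document; each statement's English description precedes it below -/
import Mathlib

section
/- For q > 1/2 there exists C > 0 such that for all real α₀, α₁: ∫_{-∞}^{∞} dx / (1+|α₀ + α₁ x + x²/2|)^q ≤ C. -/
open MeasureTheory

lemma g_integrable (q : ℝ) (hq : 1 / 2 < q) :
    Integrable (fun x : ℝ => 1 / (1 + x ^ 2 / 2) ^ q) := by
  have h2q : (1 : ℝ) < 2 * q := by linarith
  have hmeas : AEStronglyMeasurable (fun x : ℝ => 1 / (1 + x ^ 2 / 2) ^ q) volume := by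
    apply Continuous.aestronglyMeasurable
    apply Continuous.div continuous_const
    · exact (continuous_const.add ((continuous_pow 2).div_const 2)).rpow_const
        (fun x => Or.inl (by show (1:ℝ) + x ^ 2 / 2 ≠ 0; positivity))
    · intro x; positivity
  have hint : Integrable (fun x : ℝ => (4 : ℝ) ^ q * (1 + ‖x‖) ^ (-(2 * q))) volume :=
    (integrable_one_add_norm (E := ℝ) (by simpa using h2q)).const_mul _
  refine hint.mono' hmeas ?_
  filter_upwards with x
  have h1 : (0 : ℝ) < 1 + x ^ 2 / 2 := by positivity
  have h2 : ((1 + |x|) ^ 2 / 4 : ℝ) ≤ 1 + x ^ 2 / 2 := by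
    nlinarith [sq_abs x, abs_nonneg x, sq_nonneg (|x| - 1)]
  have h3 : ((1 + |x|) ^ 2 / 4 : ℝ) ^ q ≤ (1 + x ^ 2 / 2) ^ q :=
    Real.rpow_le_rpow (by positivity) h2 (by linarith)
  have h4 : ((1 + |x|) ^ 2 / 4 : ℝ) ^ q = (1 + |x|) ^ (2 * q) / 4 ^ q := by
    rw [Real.div_rpow (by positivity) (by norm_num)]
    congr 1
    rw [← Real.rpow_natCast (1 + |x|) 2, ← Real.rpow_mul (by positivity)]
    norm_num
  have hpos : (0 : ℝ) < (1 + |x|) ^ (2 * q) / 4 ^ q := by positivity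
  have h5 : 1 / (1 + x ^ 2 / 2) ^ q ≤ 1 / ((1 + |x|) ^ (2 * q) / 4 ^ q) := by
    apply one_div_le_one_div_of_le hpos
    rw [← h4]; exact h3
  have h6 : 1 / ((1 + |x|) ^ (2 * q) / 4 ^ q) = (4 : ℝ) ^ q * (1 + ‖x‖) ^ (-(2 * q)) := by
    rw [Real.norm_eq_abs, Real.rpow_neg (by positivity)]
    field_simp
  rw [Real.norm_eq_abs, abs_of_nonneg (by positivity)]
  rw [← h6]; exact h5

lemma aux_bound (q : ℝ) (hq : 0 < q) (t s : ℝ) (h : t ^ 2 / 2 ≤ |s|) :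
    1 / (1 + |s|) ^ q ≤ 1 / (1 + t ^ 2 / 2) ^ q := by
  apply one_div_le_one_div_of_le (Real.rpow_pos_of_pos (by positivity) q)
  exact Real.rpow_le_rpow (by positivity) (by linarith) hq.le

theorem quadratic_weight_integral (q : ℝ) (hq : 1 / 2 < q) :
    ∃ C > 0, ∀ α₀ α₁ : ℝ,
      ∫ x : ℝ, 1 / (1 + |α₀ + α₁ * x + x ^ 2 / 2|) ^ q ≤ C := by
  have hq0 : (0 : ℝ) < q := by linarith
  set g : ℝ → ℝ := fun x => 1 / (1 + x ^ 2 / 2) ^ q with hgdef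
  have hgi : Integrable g := g_integrable q hq
  have hgnn : ∀ x, 0 ≤ g x := fun x => by
    simp only [hgdef]; positivity
  set I := ∫ x, g x with hIdef
  have hInn : 0 ≤ I := integral_nonneg hgnn
  refine ⟨2 * I + 1, by linarith, fun α₀ α₁ => ?_⟩
  set β := α₀ - α₁ ^ 2 / 2 with hβdef
  set a := Real.sqrt (max (-2 * β) 0) with hadef
  have ha2 : a ^ 2 = max (-2 * β) 0 := Real.sq_sqrt (le_max_right _ _)
  clear_value a
  clear_value β
  -- pointwise majorant
  have hmaj : ∀ x : ℝ,
      1 / (1 + |α₀ + α₁ * x + x ^ 2 / 2|) ^ q ≤ g (x + α₁ - a) + g (x + α₁ + a) := by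
    intro x
    simp only [hgdef]
    have hy : α₀ + α₁ * x + x ^ 2 / 2 = (x + α₁) ^ 2 / 2 + β := by
      rw [hβdef]; ring
    rw [hy]
    set y := x + α₁ with hydef
    clear_value y
    have key : (y - a) ^ 2 / 2 ≤ |y ^ 2 / 2 + β| ∨ (y + a) ^ 2 / 2 ≤ |y ^ 2 / 2 + β| := by
      rcases le_or_gt 0 β with hβ | hβ
      · left
        have ha0 : a = 0 := by
          rw [hadef, max_eq_right (by linarith), Real.sqrt_zero]
        rw [ha0]
        have h0 : y ^ 2 / 2 + β ≥ 0 := by positivity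
        rw [abs_of_nonneg h0]
        have hyy : (y - 0) ^ 2 = y ^ 2 := by ring
        linarith
      · have ha2' : a ^ 2 = -2 * β := by
          rw [ha2, max_eq_left (by linarith)]
        have hfac : y ^ 2 / 2 + β = (y - a) * (y + a) / 2 := by
          linear_combination (1 / 2) * ha2'
        have habs : |y ^ 2 / 2 + β| = |y - a| * |y + a| / 2 := by
          rw [hfac, abs_div, abs_mul]
          norm_num
        rcases le_total |y - a| |y + a| with hc | hc
        · left
          rw [habs]
          have : (y - a) ^ 2 ≤ |y - a| * |y + a| := by
            calc (y - a) ^ 2 = |y - a| * |y - a| := by rw [← abs_mul, ← sq, abs_of_nonneg (sq_nonneg _)]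
            _ ≤ |y - a| * |y + a| := by
                exact mul_le_mul_of_nonneg_left hc (abs_nonneg _)
          linarith
        · right
          rw [habs]
          have : (y + a) ^ 2 ≤ |y - a| * |y + a| := by
            calc (y + a) ^ 2 = |y + a| * |y + a| := by rw [← abs_mul, ← sq, abs_of_nonneg (sq_nonneg _)]
            _ ≤ |y - a| * |y + a| := by
                exact mul_le_mul_of_nonneg_right hc (abs_nonneg _)
          linarith
    rcases key with h | h
    · exact (aux_bound q hq0 (y - a) _ h).trans
        (le_add_of_nonneg_right (by positivity))
    · exact (aux_bound q hq0 (y + a) _ h).trans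
        (le_add_of_nonneg_left (by positivity))
  -- integrability of majorant
  have e1 : (fun x : ℝ => g (x + α₁ - a)) = fun x => g (x - (a - α₁)) := by
    funext x; congr 1; ring
  have e2 : (fun x : ℝ => g (x + α₁ + a)) = fun x => g (x - (-a - α₁)) := by
    funext x; congr 1; ring
  have hi1 : Integrable (fun x : ℝ => g (x + α₁ - a)) := by
    rw [e1]; exact hgi.comp_sub_right _
  have hi2 : Integrable (fun x : ℝ => g (x + α₁ + a)) := by
    rw [e2]; exact hgi.comp_sub_right _
  have hle := integral_mono_of_nonneg
    (ae_of_all _ (fun x => by positivity))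
    (hi1.add hi2) (ae_of_all _ hmaj)
  have hsum : ∫ x : ℝ, (g (x + α₁ - a) + g (x + α₁ + a)) = 2 * I := by
    rw [integral_add hi1 hi2, e1, e2,
      integral_sub_right_eq_self g (a - α₁), integral_sub_right_eq_self g (-a - α₁)]
    ring
  calc ∫ x : ℝ, 1 / (1 + |α₀ + α₁ * x + x ^ 2 / 2|) ^ q
      ≤ ∫ x : ℝ, (g (x + α₁ - a) + g (x + α₁ + a)) := hle
    _ = 2 * I := hsum
    _ ≤ 2 * I + 1 := by linarith
end

section
/- Let m: ℝ → ℝ be a smooth function with m(ξ) = 1 for |ξ| ≤ 1 and m(ξ) = |ξ|^{-1} for |ξ| ≥ 2, m nonincreasing in |ξ| and comparable to (1+|ξ|)^{-1}. Then for the multiplier M(ξ₁,ξ₂) = (m(ξ₁+ξ₂) - m(ξ₁)m(ξ₂))/(m(ξ₁)m(ξ₂)): if |ξ₁| ≪ |ξ₂| and |ξ₁| ≤ N/2 (with m replaced by m(·/N)) then |M| ≲ |ξ₁|/|ξ₂|. -/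
theorem I_multiplier_commutator_bound (m : ℝ → ℝ)
    (hsmooth : ContDiff ℝ (⊤ : ℕ∞) m)
    (hone : ∀ ξ : ℝ, |ξ| ≤ 1 → m ξ = 1)
    (hdecay : ∀ ξ : ℝ, 2 ≤ |ξ| → m ξ = |ξ|⁻¹)
    (hmono : ∀ ξ η : ℝ, |ξ| ≤ |η| → m η ≤ m ξ)
    (hcomp : ∃ c₁ > (0:ℝ), ∃ c₂ > (0:ℝ), ∀ ξ : ℝ,
      c₁ * (1 + |ξ|)⁻¹ ≤ m ξ ∧ m ξ ≤ c₂ * (1 + |ξ|)⁻¹) :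
    ∃ C > 0, ∀ N : ℝ, 1 ≤ N → ∀ ξ₁ ξ₂ : ℝ, 2 * |ξ₁| ≤ |ξ₂| → |ξ₁| ≤ N →
      |m ((ξ₁ + ξ₂) / N) - m (ξ₁ / N) * m (ξ₂ / N)| ≤
        C * (|ξ₁| / |ξ₂|) * (m (ξ₁ / N) * m (ξ₂ / N)) := by
  obtain ⟨c₁, hc₁, c₂, hc₂, hcomp⟩ := hcomp
  have hdiff : Differentiable ℝ m := hsmooth.differentiable (by simp)
  obtain ⟨x₀, hx₀mem, hx₀⟩ := (isCompact_Icc (a := (-5:ℝ)) (b := 5)).exists_isMaxOn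
    ⟨0, by norm_num⟩ ((hsmooth.continuous_deriv (by simp)).abs.continuousOn)
  set K := |deriv m x₀| with hKdef
  have hK0 : 0 ≤ K := abs_nonneg _
  refine ⟨max 2 (20 * (K + 1) / c₁), lt_of_lt_of_le (by norm_num) (le_max_left _ _), ?_⟩
  set C := max 2 (20 * (K + 1) / c₁) with hCdef
  have hC2 : (2:ℝ) ≤ C := le_max_left _ _
  have hCK : 20 * (K + 1) / c₁ ≤ C := le_max_right _ _
  have hC0 : (0:ℝ) < C := lt_of_lt_of_le (by norm_num) hC2
  intro N hN ξ₁ ξ₂ h21 h1N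
  have hN0 : (0:ℝ) < N := lt_of_lt_of_le one_pos hN
  rcases eq_or_ne ξ₁ 0 with rfl | hξ₁
  · simp [hone 0 (by norm_num)]
  have hξ₁pos : (0:ℝ) < |ξ₁| := abs_pos.mpr hξ₁
  have hξ₂pos : (0:ℝ) < |ξ₂| := by linarith
  set u := ξ₁ / N with hu
  set v := ξ₂ / N with hv
  have hquv : (ξ₁ + ξ₂) / N = u + v := add_div _ _ _
  have hau : |u| = |ξ₁| / N := by rw [hu, abs_div, abs_of_pos hN0]
  have hav : |v| = |ξ₂| / N := by rw [hv, abs_div, abs_of_pos hN0]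
  have hu1 : |u| ≤ 1 := by rw [hau]; exact div_le_one_of_le₀ h1N hN0.le
  have hmu : m u = 1 := hone u hu1
  have h2uv : 2 * |u| ≤ |v| := by
    rw [hau, hav, ← mul_div_assoc]
    gcongr
  have ha0 : (0:ℝ) < |u| := by rw [hau]; positivity
  have hb0 : (0:ℝ) < |v| := by rw [hav]; positivity
  have hrat : |ξ₁| / |ξ₂| = |u| / |v| := by
    rw [hau, hav]
    field_simp
  rw [hquv, hmu, one_mul, hrat]
  rcases le_or_gt (|v|) 4 with hv4 | hv4
  · -- small frequency case: mean value theorem on [-5, 5]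
    have hvabs : |v| ≤ 5 := by linarith
    have hvI : v ∈ Set.Icc (-5:ℝ) 5 := by
      rcases abs_le.mp hvabs with ⟨h1, h2⟩; exact ⟨h1, h2⟩
    have huvabs : |u + v| ≤ 5 := by
      calc |u + v| ≤ |u| + |v| := abs_add_le _ _
        _ ≤ 5 := by linarith
    have huvI : u + v ∈ Set.Icc (-5:ℝ) 5 := by
      rcases abs_le.mp huvabs with ⟨h1, h2⟩; exact ⟨h1, h2⟩
    have hmvt : |m (u + v) - m v| ≤ K * |u| := by
      have h := Convex.norm_image_sub_le_of_norm_hasDerivWithin_le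
        (f := m) (f' := deriv m) (s := Set.Icc (-5:ℝ) 5) (C := K)
        (fun x _ => (hdiff x).hasDerivAt.hasDerivWithinAt)
        (fun x hx => by simpa [Real.norm_eq_abs] using hx₀ hx)
        (convex_Icc _ _) hvI huvI
      simpa [Real.norm_eq_abs, add_sub_cancel_right] using h
    have h5 : (1:ℝ) + |v| ≤ 5 := by linarith
    have hmv : c₁ / 5 ≤ m v := by
      refine le_trans ?_ (hcomp v).1
      rw [div_eq_mul_inv]
      gcongr
    refine hmvt.trans ?_
    calc K * |u| ≤ (K + 1) * |u| := by nlinarith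
      _ = (20 * (K + 1) / c₁) * (|u| / 4) * (c₁ / 5) := by
          field_simp
          ring
      _ ≤ C * (|u| / 4) * (c₁ / 5) := by gcongr
      _ ≤ C * (|u| / |v|) * (c₁ / 5) := by gcongr
      _ ≤ C * (|u| / |v|) * m v := by gcongr
  · -- large frequency case: explicit formula m = |·|⁻¹
    have hv2 : (2:ℝ) ≤ |v| := by linarith
    have h1 : |v| - |u| ≤ |u + v| := by
      have h := abs_sub_abs_le_abs_sub v (u + v)
      have h2 : v - (u + v) = -u := by ring
      rw [h2, abs_neg] at h
      linarith
    have hhalf : |v| / 2 ≤ |u + v| := by linarith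
    have huv2 : (2:ℝ) ≤ |u + v| := by linarith
    have huvpos : (0:ℝ) < |u + v| := by linarith
    rw [hdecay (u + v) huv2, hdecay v hv2]
    have hnum : abs (|v| - |u + v|) ≤ |u| := by
      have h := abs_abs_sub_abs_le_abs_sub v (u + v)
      have h2 : v - (u + v) = -u := by ring
      rwa [h2, abs_neg] at h
    have key : |(|u + v|)⁻¹ - (|v|)⁻¹| ≤ 2 * (|u| / |v|) * |v|⁻¹ := by
      rw [inv_sub_inv huvpos.ne' hb0.ne', abs_div,
        abs_of_pos (by positivity : (0:ℝ) < |u + v| * |v|)]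
      have hdd : abs (|v| - |u + v|) / (|u + v| * |v|) ≤ |u| / ((|v| / 2) * |v|) :=
        div_le_div₀ (abs_nonneg u) hnum (by positivity)
          (by gcongr)
      refine hdd.trans (le_of_eq ?_)
      field_simp
    refine key.trans ?_
    gcongr
end

section
/- For b > 1/2, a > 1/4, and any ξ₁, τ₁ ∈ ℝ, the quantity J := (1+|τ₁ - ξ₁²/2|)^{-2b} ∫_ℝ dτ ∫_ℝ dξ (1+|τ|)^{-2a}(1+|τ - τ₁ + (ξ-ξ₁)²/2|)^{-2b} is bounded by a constant independent of (ξ₁,τ₁). -/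
/-!
Write `⟨x⟩ = 1 + |x|`. The inner integral is `∫ ⟨c + s²/2⟩^(-2b) ds` with `c = τ - τ₁`, and it
decays like `⟨c⟩^(-1/2)`: for `c ≥ -1` the integrand is `≲ ⟨c⟩^(-1/2) ⟨s⟩^(-2b)`, while for
`c = -q²/2 ≤ -1` the parabola has simple zeros at `±q` with slope `≍ q`, so the integrand is
dominated by the two rescaled profiles `⟨c ± q s/2⟩^(-2b)`, each of integral `≍ 1/q ≲ ⟨c⟩^(-1/2)`.
The outer integral of `⟨τ⟩^(-2a) ⟨τ - τ₁⟩^(-1/2)` is then bounded uniformly in `τ₁`, since this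
product is at most `⟨τ⟩^(-(2a+1/2)) + ⟨τ - τ₁⟩^(-(2a+1/2))` and `2a + 1/2 > 1`. The prefactor is at
most `1`.
-/

open MeasureTheory

theorem integrable_one_add_abs_rpow_neg {p : ℝ} (hp : 1 < p) :
    Integrable (fun x : ℝ => (1 + |x|) ^ (-p)) := by
  simpa only [Real.norm_eq_abs] using
    integrable_one_add_norm (E := ℝ) (μ := volume) (r := p) (by simpa using hp)

theorem integral_comp_add_mul {E : Type*} [NormedAddCommGroup E] [NormedSpace ℝ E]
    (g : ℝ → E) (c r : ℝ) : ∫ s, g (c + r * s) = |r⁻¹| • ∫ x, g x := by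
  rw [Measure.integral_comp_mul_left (fun x => g (c + x)), integral_add_left_eq_self]

theorem MeasureTheory.Integrable.comp_add_mul {E : Type*} [NormedAddCommGroup E] {g : ℝ → E}
    (hg : Integrable g) (c : ℝ) {r : ℝ} (hr : r ≠ 0) : Integrable fun s => g (c + r * s) :=
  (hg.comp_add_left c).comp_mul_left' hr

theorem rpow_neg_le_of_le_mul {A B M p : ℝ} (hB : 0 < B) (hM : 0 < M) (h : B ≤ M * A)
    (hp : 0 ≤ p) : A ^ (-p) ≤ M ^ p * B ^ (-p) := by
  calc A ^ (-p) ≤ (B / M) ^ (-p) :=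
        Real.rpow_le_rpow_of_nonpos (by positivity) ((div_le_iff₀' hM).2 h) (neg_nonpos.2 hp)
    _ = M ^ p * B ^ (-p) := by
        rw [Real.div_rpow hB.le hM.le, Real.rpow_neg hM.le, div_inv_eq_mul, mul_comm]

theorem rpow_neg_mul_rpow_neg_le_add {u v p q : ℝ} (hu : 1 ≤ u) (hv : 1 ≤ v) (hp : 0 ≤ p)
    (hq : 0 ≤ q) : u ^ (-p) * v ^ (-q) ≤ u ^ (-(p + q)) + v ^ (-(p + q)) := by
  have hu0 : 0 < u := by linarith
  have hv0 : 0 < v := by linarith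
  rw [neg_add, Real.rpow_add hu0, Real.rpow_add hv0]
  rcases le_total u v with huv | hvu
  · have : v ^ (-q) ≤ u ^ (-q) := Real.rpow_le_rpow_of_nonpos hu0 huv (neg_nonpos.2 hq)
    have := mul_le_mul_of_nonneg_left this (Real.rpow_nonneg hu0.le (-p))
    linarith [mul_nonneg (Real.rpow_nonneg hv0.le (-p)) (Real.rpow_nonneg hv0.le (-q))]
  · have : u ^ (-p) ≤ v ^ (-p) := Real.rpow_le_rpow_of_nonpos hv0 hvu (neg_nonpos.2 hp)
    have := mul_le_mul_of_nonneg_right this (Real.rpow_nonneg hv0.le (-q))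
    linarith [mul_nonneg (Real.rpow_nonneg hu0.le (-p)) (Real.rpow_nonneg hu0.le (-q))]

theorem sqrt_one_add_abs_mul_le {c : ℝ} (hc : -1 ≤ c) (s : ℝ) :
    √(1 + |c|) * (1 + |s|) ≤ 8 * (1 + |c + s ^ 2 / 2|) := by
  have hd := Real.sq_sqrt (by positivity : (0 : ℝ) ≤ 1 + |c|)
  have hd0 := Real.sqrt_nonneg (1 + |c|)
  generalize √(1 + |c|) = d at hd hd0 ⊢
  have hs := sq_abs s
  have hs0 := abs_nonneg s
  rcases le_total 0 c with hc0 | hc0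
  · rw [abs_of_nonneg hc0] at hd
    rw [abs_of_nonneg (add_nonneg hc0 (by positivity))]
    nlinarith [sq_nonneg (d - |s|), sq_nonneg (d - 1)]
  · rw [abs_of_nonpos hc0] at hd
    have hd2 : d ≤ 2 := by nlinarith
    nlinarith [le_abs_self (c + s ^ 2 / 2), abs_nonneg (c + s ^ 2 / 2), sq_nonneg (|s| - 1)]

theorem abs_mul_abs_sub_le_abs_sq_sub {q : ℝ} (hq : 0 ≤ q) (s : ℝ) :
    q * |(|s|) - q| ≤ |s ^ 2 - q ^ 2| := by
  rw [← sq_abs s, sq_sub_sq, abs_mul, abs_of_nonneg (by positivity : 0 ≤ |s| + q)]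
  exact mul_le_mul_of_nonneg_right (by linarith [abs_nonneg s]) (abs_nonneg _)

theorem one_add_abs_add_sq_div_two_rpow_neg_le {p c : ℝ} (hp : 1 ≤ p) (hc : -1 ≤ c) (s : ℝ) :
    (1 + |c + s ^ 2 / 2|) ^ (-p) ≤ 8 ^ p * (1 + |c|) ^ (-(1 / 2 : ℝ)) * (1 + |s|) ^ (-p) := by
  calc (1 + |c + s ^ 2 / 2|) ^ (-p)
      ≤ 8 ^ p * (√(1 + |c|) * (1 + |s|)) ^ (-p) :=
        rpow_neg_le_of_le_mul (by positivity) (by norm_num) (sqrt_one_add_abs_mul_le hc s)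
          (by linarith)
    _ = 8 ^ p * (1 + |c|) ^ (-(p / 2)) * (1 + |s|) ^ (-p) := by
        rw [Real.mul_rpow (by positivity) (by positivity), Real.sqrt_eq_rpow,
          ← Real.rpow_mul (by positivity)]
        ring_nf
    _ ≤ 8 ^ p * (1 + |c|) ^ (-(1 / 2 : ℝ)) * (1 + |s|) ^ (-p) := by
        gcongr
        linarith [abs_nonneg c]

theorem integral_one_add_abs_add_sq_div_two_rpow_neg_le_of_neg_one_le {p c : ℝ} (hp : 1 < p)
    (hc : -1 ≤ c) :
    ∫ s, (1 + |c + s ^ 2 / 2|) ^ (-p) ≤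
      8 ^ p * (1 + |c|) ^ (-(1 / 2 : ℝ)) * ∫ x, (1 + |x|) ^ (-p) := by
  rw [← integral_const_mul]
  exact integral_mono_of_nonneg (.of_forall fun s => by positivity)
    ((integrable_one_add_abs_rpow_neg hp).const_mul _)
    (.of_forall (one_add_abs_add_sq_div_two_rpow_neg_le hp.le hc))

theorem integral_one_add_abs_add_sq_div_two_rpow_neg_le_of_le_neg_one {p c : ℝ} (hp : 1 < p)
    (hc : c ≤ -1) :
    ∫ s, (1 + |c + s ^ 2 / 2|) ^ (-p) ≤
      4 * (1 + |c|) ^ (-(1 / 2 : ℝ)) * ∫ x, (1 + |x|) ^ (-p) := by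
  set q := √(-2 * c)
  have hq2 : q ^ 2 = -2 * c := Real.sq_sqrt (by linarith)
  have hq : 0 < q := Real.sqrt_pos.2 (by linarith)
  have hpt : ∀ s, (1 + |c + s ^ 2 / 2|) ^ (-p) ≤
      (1 + |c + q / 2 * s|) ^ (-p) + (1 + |c + -(q / 2) * s|) ^ (-p) := by
    intro s
    have hkey : q / 2 * |(|s|) - q| ≤ |c + s ^ 2 / 2| := by
      have := abs_mul_abs_sub_le_abs_sq_sub hq.le s
      rw [show c + s ^ 2 / 2 = (s ^ 2 - q ^ 2) / 2 by linear_combination hq2 / 2, abs_div,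
        abs_two]
      linarith
    have hmono : ∀ r, |c + r * s| = q / 2 * |(|s|) - q| →
        (1 + |c + s ^ 2 / 2|) ^ (-p) ≤ (1 + |c + r * s|) ^ (-p) := fun r hr =>
      Real.rpow_le_rpow_of_nonpos (by positivity) (by linarith) (by linarith)
    rcases le_total 0 s with hs | hs
    · refine (hmono _ ?_).trans (le_add_of_nonneg_right (by positivity))
      rw [abs_of_nonneg hs, show c + q / 2 * s = q / 2 * (s - q) by linear_combination hq2 / 2,
        abs_mul, abs_of_pos (half_pos hq)]
    · refine (hmono _ ?_).trans (le_add_of_nonneg_left (by positivity))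
      rw [abs_of_nonpos hs, show c + -(q / 2) * s = q / 2 * (-s - q) by
        linear_combination hq2 / 2, abs_mul, abs_of_pos (half_pos hq)]
  have hint := integrable_one_add_abs_rpow_neg hp
  have hrescale : ∀ r : ℝ, ∫ s, (1 + |c + r * s|) ^ (-p) = |r⁻¹| * ∫ x, (1 + |x|) ^ (-p) :=
    integral_comp_add_mul (fun x => (1 + |x|) ^ (-p)) c
  have hq_ge : √(1 + |c|) ≤ q :=
    Real.sqrt_le_sqrt (by rw [abs_of_nonpos (by linarith)]; linarith)
  calc ∫ s, (1 + |c + s ^ 2 / 2|) ^ (-p)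
      ≤ ∫ s, (1 + |c + q / 2 * s|) ^ (-p) + (1 + |c + -(q / 2) * s|) ^ (-p) :=
        integral_mono_of_nonneg (.of_forall fun s => by positivity)
          ((hint.comp_add_mul c (by positivity)).add (hint.comp_add_mul c (by simp [hq.ne'])))
          (.of_forall hpt)
    _ = 4 * q⁻¹ * ∫ x, (1 + |x|) ^ (-p) := by
        rw [integral_add (hint.comp_add_mul c (by positivity))
          (hint.comp_add_mul c (by simp [hq.ne'])), hrescale, hrescale, inv_neg, abs_neg,
          abs_of_pos (by positivity)]
        ring
    _ ≤ 4 * (1 + |c|) ^ (-(1 / 2 : ℝ)) * ∫ x, (1 + |x|) ^ (-p) := by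
        rw [Real.rpow_neg (by positivity), ← Real.sqrt_eq_rpow]
        gcongr

theorem integral_one_add_abs_add_sq_div_two_rpow_neg_le {p : ℝ} (hp : 1 < p) (c : ℝ) :
    ∫ s, (1 + |c + s ^ 2 / 2|) ^ (-p) ≤
      (8 ^ p + 4) * (1 + |c|) ^ (-(1 / 2 : ℝ)) * ∫ x, (1 + |x|) ^ (-p) := by
  have h8 : 0 ≤ (8 : ℝ) ^ p := by positivity
  have hw : 0 ≤ (1 + |c|) ^ (-(1 / 2 : ℝ)) * ∫ x, (1 + |x|) ^ (-p) :=
    mul_nonneg (by positivity) (integral_nonneg fun x => by positivity)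
  rcases le_total (-1) c with hc | hc
  · linarith [integral_one_add_abs_add_sq_div_two_rpow_neg_le_of_neg_one_le hp hc,
      mul_nonneg h8 hw]
  · linarith [integral_one_add_abs_add_sq_div_two_rpow_neg_le_of_le_neg_one hp hc,
      mul_nonneg h8 hw]

theorem integrable_one_add_abs_rpow_neg_mul_one_add_abs_sub_rpow_neg {p q : ℝ} (hp : 0 ≤ p)
    (hq : 0 ≤ q) (hpq : 1 < p + q) (t : ℝ) :
    Integrable fun τ : ℝ => (1 + |τ|) ^ (-p) * (1 + |τ - t|) ^ (-q) := by
  have hint := integrable_one_add_abs_rpow_neg hpq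
  refine (hint.add (hint.comp_sub_right t)).mono' (by fun_prop) (.of_forall fun τ => ?_)
  rw [Real.norm_of_nonneg (by positivity)]
  exact rpow_neg_mul_rpow_neg_le_add (by linarith [abs_nonneg τ])
    (by linarith [abs_nonneg (τ - t)]) hp hq

theorem integral_one_add_abs_rpow_neg_mul_one_add_abs_sub_rpow_neg_le {p q : ℝ} (hp : 0 ≤ p)
    (hq : 0 ≤ q) (hpq : 1 < p + q) (t : ℝ) :
    ∫ τ, (1 + |τ|) ^ (-p) * (1 + |τ - t|) ^ (-q) ≤ 2 * ∫ x, (1 + |x|) ^ (-(p + q)) := by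
  have hint := integrable_one_add_abs_rpow_neg hpq
  calc ∫ τ, (1 + |τ|) ^ (-p) * (1 + |τ - t|) ^ (-q)
      ≤ ∫ τ, (1 + |τ|) ^ (-(p + q)) + (1 + |τ - t|) ^ (-(p + q)) :=
        integral_mono (integrable_one_add_abs_rpow_neg_mul_one_add_abs_sub_rpow_neg hp hq hpq t)
          (hint.add (hint.comp_sub_right t))
          fun τ => rpow_neg_mul_rpow_neg_le_add (by linarith [abs_nonneg τ])
            (by linarith [abs_nonneg (τ - t)]) hp hq
    _ = 2 * ∫ x, (1 + |x|) ^ (-(p + q)) := by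
        rw [integral_add hint (hint.comp_sub_right t),
          integral_sub_right_eq_self (fun x => (1 + |x|) ^ (-(p + q))) t]
        ring

theorem uniform_modulation_integral (a b : ℝ) (ha : 1 / 4 < a) (hb : 1 / 2 < b) :
    ∃ C : ℝ, ∀ ξ₁ τ₁ : ℝ,
      (1 + |τ₁ - ξ₁ ^ 2 / 2|) ^ (-(2 * b)) *
        ∫ τ : ℝ, ∫ ξ : ℝ,
          (1 + |τ|) ^ (-(2 * a)) *
            (1 + |τ - τ₁ + (ξ - ξ₁) ^ 2 / 2|) ^ (-(2 * b)) ≤ C := by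
  set K : ℝ := (8 ^ (2 * b) + 4) * ∫ x : ℝ, (1 + |x|) ^ (-(2 * b))
  have hK : 0 ≤ K := mul_nonneg (by positivity) (integral_nonneg fun x => by positivity)
  refine ⟨K * (2 * ∫ x, (1 + |x|) ^ (-(2 * a + 1 / 2))), fun ξ₁ τ₁ => ?_⟩
  have hinner : ∀ τ, ∫ ξ, (1 + |τ|) ^ (-(2 * a)) * (1 + |τ - τ₁ + (ξ - ξ₁) ^ 2 / 2|) ^ (-(2 * b))
      ≤ K * ((1 + |τ|) ^ (-(2 * a)) * (1 + |τ - τ₁|) ^ (-(1 / 2 : ℝ))) := fun τ => by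
    rw [integral_const_mul,
      integral_sub_right_eq_self (fun s => (1 + |τ - τ₁ + s ^ 2 / 2|) ^ (-(2 * b))) ξ₁]
    have := integral_one_add_abs_add_sq_div_two_rpow_neg_le (by linarith : 1 < 2 * b) (τ - τ₁)
    have := mul_le_mul_of_nonneg_left this (by positivity : 0 ≤ (1 + |τ|) ^ (-(2 * a)))
    linarith
  have houter : ∫ τ, ∫ ξ, (1 + |τ|) ^ (-(2 * a)) *
      (1 + |τ - τ₁ + (ξ - ξ₁) ^ 2 / 2|) ^ (-(2 * b)) ≤
        K * (2 * ∫ x, (1 + |x|) ^ (-(2 * a + 1 / 2))) := by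
    refine (integral_mono_of_nonneg (.of_forall fun τ => integral_nonneg fun ξ => by positivity)
      ((integrable_one_add_abs_rpow_neg_mul_one_add_abs_sub_rpow_neg (by linarith)
        (by norm_num) (by linarith) τ₁).const_mul K) (.of_forall hinner)).trans ?_
    rw [integral_const_mul]
    exact mul_le_mul_of_nonneg_left (integral_one_add_abs_rpow_neg_mul_one_add_abs_sub_rpow_neg_le
      (by linarith) (by norm_num) (by linarith) τ₁) hK
  have hprefactor : (1 + |τ₁ - ξ₁ ^ 2 / 2|) ^ (-(2 * b)) ≤ 1 :=
    Real.rpow_le_one_of_one_le_of_nonpos (by linarith [abs_nonneg (τ₁ - ξ₁ ^ 2 / 2)])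
      (by linarith)
  exact (mul_le_of_le_one_left (integral_nonneg fun τ => integral_nonneg fun ξ => by positivity)
    hprefactor).trans houter
end
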